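/- arXiv:math/0609634 — 2 statements merged into one kernel-verified Lean document; each statement's English description precedes it below -/
import Mathlib

section
/- Let k be a natural number and χ an infinite cardinal with χ^{ℵ_0} = χ. For each ℓ ≤ k let S_ℓ be the set of ordinals below ℶ_ℓ(χ) (where ℶ_0(χ) = χ and ℶ_{ℓ+1}(χ) = 2^{ℶ_ℓ(χ)}), and let Λ = ∏_{ℓ≤k}(ℕ → S_ℓ). Suppose ⟨B_ν : ν ∈ Λ_0 ∪ … ∪ Λ_k⟩ is a family of sets with |B_ν| = ℶ_m(χ) whenever ν ∈ Λ_m. Then there is a family ⟨h_{η̄} : η̄ ∈ Λ⟩ such that: (a) each h_{η̄} is a function with domain {η̄↾⟨m,n⟩ : m ≤ k, n ∈ ℕ}; (b) h_{η̄}(η̄↾⟨m,n⟩) ∈ B_{η̄↾⟨m,n⟩} for all m ≤ k, n ∈ ℕ; and (c) for every function h defined on Λ_0 ∪ … ∪ Λ_k with h(ν) ∈ B_ν for every ν, and for all ordinals α_ℓ < ℶ_ℓ(χ) (ℓ ≤ k), there exists η̄ = ⟨η_0, …, η_k⟩ ∈ Λ with h_{η̄} ⊆ h and η_ℓ(0)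 = α_ℓ for every ℓ ≤ k. -/
open Cardinal

namespace Sh883

/-- A "restricted tuple" in the many-sorted setting: the result of replacing the `m`-th
coordinate of a tuple `⟨η_0, …, η_k⟩` (with `η_l : ℕ → S l`) by a finite sequence of
elements of `S m`, keeping the other coordinates. -/
structure ResD (k : ℕ) (S : Fin (k + 1) → Type u) where
  m : Fin (k + 1)
  seq : List (S m)
  rest : (l : Fin (k + 1)) → l ≠ m → ℕ → S l

/-- `η̄↾⟨m,n⟩` : replace the `m`-th coordinate of `η̄` by the finite sequence
`⟨η_m(0), …, η_m(n-1)⟩`. -/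
def restrictAtD {k : ℕ} {S : Fin (k + 1) → Type u} (η : (m : Fin (k + 1)) → ℕ → S m)
    (m : Fin (k + 1)) (n : ℕ) : ResD k S :=
  ⟨m, List.ofFn fun i : Fin n => η m i, fun l _ => η l⟩

/-- `Λ_m = {η̄↾⟨m,n⟩ : η̄ ∈ Λ, n ∈ ℕ}`. -/
def LambdaResAtD {k : ℕ} {S : Fin (k + 1) → Type u}
    (Λ : Set ((m : Fin (k + 1)) → ℕ → S m)) (m : Fin (k + 1)) : Set (ResD k S) :=
  {ν | ∃ η ∈ Λ, ∃ n : ℕ, ν = restrictAtD η m n}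

/-- A `(Λ, χ̄)`-black box: a family of ordinals `α_{η̄,m,n} < χ_m` (for `η̄ ∈ Λ`, `m ≤ k`,
`n ∈ ℕ`) such that for every function `h` on `Λ_0 ∪ … ∪ Λ_k` with `h(ν)` an ordinal
`< χ_m` whenever `ν ∈ Λ_m`, there is `η̄ ∈ Λ` with `h(η̄↾⟨m,n⟩) = α_{η̄,m,n}` for all
`m ≤ k` and `n ∈ ℕ`. -/
def IsBlackBoxD {k : ℕ} {S : Fin (k + 1) → Type u}
    (Λ : Set ((m : Fin (k + 1)) → ℕ → S m)) (χ : Fin (k + 1) → Cardinal.{u})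
    (A : ↥Λ → Fin (k + 1) → ℕ → Ordinal.{u}) : Prop :=
  (∀ (η : ↥Λ) (m : Fin (k + 1)) (n : ℕ), A η m n < (χ m).ord) ∧
    ∀ h : ResD k S → Ordinal.{u},
      (∀ m : Fin (k + 1), ∀ ν ∈ LambdaResAtD Λ m, h ν < (χ m).ord) →
      ∃ η : ↥Λ, ∀ (m : Fin (k + 1)) (n : ℕ),
        h (restrictAtD (η : (m : Fin (k + 1)) → ℕ → S m) m n) = A η m n

/-- Iterated beth function: `iterBeth χ 0 = χ` and `iterBeth χ (l+1) = 2 ^ iterBeth χ l`. -/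
def iterBeth (χ : Cardinal.{u}) : ℕ → Cardinal.{u}
  | 0 => χ
  | l + 1 => 2 ^ iterBeth χ l

end Sh883

/-!
For `m ≤ k` the coordinates below `m` range over a set of size at most `ℶ_{m-1}(χ)` (a singleton
for `m = 0`; as `ℶ_l(χ)^{ℵ₀} = ℶ_l(χ)`), and `ℶ_m(χ)^{ℶ_{m-1}(χ)} = ℶ_m(χ)`. So a single element of `S_m` can code
a function from the possible coordinates below `m` to `S_m`, and `S_m` is in bijection with each
`B_ν`, `ν ∈ Λ_m`. The guess `h_{η̄}(η̄↾⟨m,n⟩)` is obtained by decoding `η_m(n+1)` at the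
coordinates of `η̄` below `m`; the shift by one leaves `η_m(0)` free to be `α_m`.

Given `h`, the tuple `η̄` is built from the top coordinate down. Once the coordinates above `m`
and `η_m↾n` are fixed, `η_m(n+1)` is chosen to code, for every choice `x` of the coordinates
below `m`, the value of `h` at the restriction determined by `η_m↾n`, `x` and the coordinates
above `m`; whatever the lower coordinates turn out to be, the guess is then right.
-/

namespace Sh883

open Function

universe u v w

section Construction

def stepSeq {α : Type w} (a : α) (step : List α → α) : ℕ → α
  | 0 => a
  | n + 1 => step (List.ofFn fun i : Fin n => stepSeq a step i)

lemma stepSeq_zero {α : Type w} (a : α) (step : List α → α) : stepSeq a step 0 = a := by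
  rw [stepSeq]

lemma stepSeq_succ {α : Type w} (a : α) (step : List α → α) (n : ℕ) :
    stepSeq a step (n + 1) = step (List.ofFn fun i : Fin n => stepSeq a step i) := by
  rw [stepSeq]

variable {k : ℕ} {S : Fin (k + 1) → Type u}

abbrev LowerCoords (S : Fin (k + 1) → Type u) (m : Fin (k + 1)) : Type u :=
  (l : Fin (k + 1)) → l < m → ℕ → S l

abbrev UpperCoords (S : Fin (k + 1) → Type u) (m : Fin (k + 1)) : Type u :=
  (l : Fin (k + 1)) → m < l → ℕ → S l

def joinCoords {m : Fin (k + 1)} (x : LowerCoords S m) (y : UpperCoords S m) :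
    (l : Fin (k + 1)) → l ≠ m → ℕ → S l :=
  fun l hl => if hlt : l < m then x l hlt else y l (lt_of_le_of_ne (not_lt.mp hlt) hl.symm)

lemma joinCoords_restrict (η : (l : Fin (k + 1)) → ℕ → S l) (m : Fin (k + 1)) :
    joinCoords (m := m) (fun l _ => η l) (fun l _ => η l) = fun l _ => η l := by
  funext l hl
  unfold joinCoords
  split <;> rfl

variable {B : ResD k S → Type v}

def codedGuess (dec : ∀ m, S m → LowerCoords S m → S m) (enc : ∀ ν : ResD k S, S ν.m → B ν)
    (η : (l : Fin (k + 1)) → ℕ → S l) (m : Fin (k + 1)) (n : ℕ) : B (restrictAtD η m n) :=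
  enc _ (dec m (η m (n + 1)) fun l _ => η l)

variable {dec : ∀ m, S m → LowerCoords S m → S m} {enc : ∀ ν : ResD k S, S ν.m → B ν}
  (hdec : ∀ m, Surjective (dec m)) (henc : ∀ ν, Surjective (enc ν))
  (h : ∀ ν, B ν) (a : ∀ m, S m)

noncomputable def nextCode (m : Fin (k + 1)) (y : UpperCoords S m) (s : List (S m)) : S m :=
  surjInv (hdec m) fun x => surjInv (henc _) (h ⟨m, s, joinCoords x y⟩)

noncomputable def guessedTuple : (m : Fin (k + 1)) → ℕ → S m :=
  wellFounded_gt.fix fun m y => stepSeq (a m) (nextCode hdec henc h m y)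

lemma guessedTuple_eq (m : Fin (k + 1)) :
    guessedTuple hdec henc h a m
      = stepSeq (a m) (nextCode hdec henc h m fun l _ => guessedTuple hdec henc h a l) :=
  wellFounded_gt.fix_eq _ m

lemma guessedTuple_zero (m : Fin (k + 1)) : guessedTuple hdec henc h a m 0 = a m := by
  rw [guessedTuple_eq, stepSeq_zero]

lemma enc_surjInv_mk {m : Fin (k + 1)} {s : List (S m)}
    {r r' : (l : Fin (k + 1)) → l ≠ m → ℕ → S l} (hr : r = r') :
    enc ⟨m, s, r'⟩ (surjInv (henc ⟨m, s, r⟩) (h ⟨m, s, r⟩)) = h ⟨m, s, r'⟩ := by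
  subst hr
  exact surjInv_eq (henc _) _

lemma codedGuess_guessedTuple (m : Fin (k + 1)) (n : ℕ) :
    codedGuess dec enc (guessedTuple hdec henc h a) m n
      = h (restrictAtD (guessedTuple hdec henc h a) m n) := by
  have hsucc : guessedTuple hdec henc h a m (n + 1)
      = nextCode hdec henc h m (fun l _ => guessedTuple hdec henc h a l)
          (List.ofFn fun i : Fin n => guessedTuple hdec henc h a m i) := by
    rw [guessedTuple_eq, stepSeq_succ, ← guessedTuple_eq]
  rw [codedGuess, hsucc]
  unfold nextCode
  rw [surjInv_eq (hdec m)]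
  exact enc_surjInv_mk henc h (joinCoords_restrict _ m)

theorem exists_codedGuess_of_surjective {dec : ∀ m, S m → LowerCoords S m → S m}
    {enc : ∀ ν : ResD k S, S ν.m → B ν} (hdec : ∀ m, Surjective (dec m))
    (henc : ∀ ν, Surjective (enc ν)) :
    ∃ H : (η : (l : Fin (k + 1)) → ℕ → S l) → (m : Fin (k + 1)) → (n : ℕ) →
        B (restrictAtD η m n),
      ∀ (h : ∀ ν, B ν) (a : ∀ m, S m), ∃ η : (l : Fin (k + 1)) → ℕ → S l,
        (∀ m n, h (restrictAtD η m n) = H η m n) ∧ ∀ m, η m 0 = a m :=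
  ⟨codedGuess dec enc, fun h a => ⟨guessedTuple hdec henc h a,
    fun m n => (codedGuess_guessedTuple hdec henc h a m n).symm,
    guessedTuple_zero hdec henc h a⟩⟩

end Construction

lemma mem_lambdaResAtD_univ {k : ℕ} {S : Fin (k + 1) → Type u} [∀ l, Nonempty (S l)]
    (ν : ResD k S) : ν ∈ LambdaResAtD Set.univ ν.m := by
  obtain ⟨m, s, r⟩ := ν
  let η : (l : Fin (k + 1)) → ℕ → S l :=
    Function.update (fun l => if hl : l = m then fun _ => Classical.arbitrary _ else r l hl) m
      fun i => s.getD i (Classical.arbitrary _)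
  refine ⟨η, Set.mem_univ _, s.length, ?_⟩
  have hseq : (List.ofFn fun i : Fin s.length => η m i) = s := by
    simp [η]
  have hrest : (fun l (_ : l ≠ m) => η l) = r := by
    funext l hl
    simp [η, hl]
  simp only [restrictAtD, hseq, hrest]

section Cardinality

variable {χ : Cardinal.{u}}

lemma aleph0_le_iterBeth (hχ : ℵ₀ ≤ χ) : ∀ n, ℵ₀ ≤ iterBeth χ n
  | 0 => hχ
  | n + 1 => (aleph0_le_iterBeth hχ n).trans (cantor _).le

lemma iterBeth_ne_zero (hχ : ℵ₀ ≤ χ) (n : ℕ) : iterBeth χ n ≠ 0 :=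
  (aleph0_pos.trans_le (aleph0_le_iterBeth hχ n)).ne'

lemma iterBeth_monotone (χ : Cardinal.{u}) : Monotone (iterBeth χ) :=
  monotone_nat_of_le_succ fun n => (cantor (iterBeth χ n)).le

lemma iterBeth_power_aleph0 (hχ : ℵ₀ ≤ χ) (hχω : χ ^ ℵ₀ = χ) :
    ∀ n, iterBeth χ n ^ ℵ₀ = iterBeth χ n
  | 0 => hχω
  | n + 1 => by
    have hn := aleph0_le_iterBeth hχ n
    change (2 ^ iterBeth χ n) ^ ℵ₀ = 2 ^ iterBeth χ n
    rw [← power_mul, mul_eq_left hn hn aleph0_ne_zero]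

lemma iterBeth_succ_power_self (hχ : ℵ₀ ≤ χ) (n : ℕ) :
    iterBeth χ (n + 1) ^ iterBeth χ n = iterBeth χ (n + 1) := by
  change (2 ^ iterBeth χ n) ^ iterBeth χ n = 2 ^ iterBeth χ n
  rw [← power_mul, mul_eq_self (aleph0_le_iterBeth hχ n)]

variable {k : ℕ} {S : Fin (k + 1) → Type u}

lemma mk_lowerCoords_le_one {m : Fin (k + 1)} (hm : (m : ℕ) = 0) : #(LowerCoords S m) ≤ 1 :=
  le_one_iff_subsingleton.mpr ⟨fun x y => funext fun l => funext fun hl =>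
    absurd hl (by simp [Fin.lt_def, hm])⟩

lemma mk_lowerCoords_le (hS : ∀ l, #(S l) = iterBeth χ l) (hχ : ℵ₀ ≤ χ) (hχω : χ ^ ℵ₀ = χ)
    {m : Fin (k + 1)} {j : ℕ} (hm : (m : ℕ) = j + 1) : #(LowerCoords S m) ≤ iterBeth χ j := by
  have factor_le (l : Fin (k + 1)) : #(l < m → ℕ → S l) ≤ iterBeth χ j := by
    by_cases hl : l < m
    · have : Unique (l < m) := uniqueProp hl
      rw [mk_congr (Equiv.funUnique _ _)]
      simp only [mk_arrow, mk_nat, lift_aleph0, lift_uzero]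
      rw [hS, iterBeth_power_aleph0 hχ hχω]
      exact iterBeth_monotone χ (by rw [Fin.lt_def] at hl; omega)
    · have : IsEmpty (l < m) := ⟨hl⟩
      rw [mk_eq_one]
      exact one_le_aleph0.trans (aleph0_le_iterBeth hχ j)
  calc #(LowerCoords S m) = prod fun l => #(l < m → ℕ → S l) := mk_pi _
    _ ≤ prod fun _ : Fin (k + 1) => iterBeth χ j := prod_le_prod _ _ factor_le
    _ = iterBeth χ j ^ (k + 1) := by simp [prod_const, ← power_natCast]
    _ ≤ iterBeth χ j := power_nat_le (aleph0_le_iterBeth hχ j)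

lemma mk_lowerCoords_arrow_le (hS : ∀ l, #(S l) = iterBeth χ l) (hχ : ℵ₀ ≤ χ)
    (hχω : χ ^ ℵ₀ = χ) (m : Fin (k + 1)) : #(LowerCoords S m → S m) ≤ #(S m) := by
  rw [← power_def, hS]
  obtain hm | hm := eq_or_ne (m : ℕ) 0
  · calc iterBeth χ m ^ #(LowerCoords S m) ≤ iterBeth χ m ^ (1 : Cardinal) :=
          power_le_power_left (iterBeth_ne_zero hχ m) (mk_lowerCoords_le_one hm)
      _ = iterBeth χ m := power_one _
  · obtain ⟨j, hj⟩ := Nat.exists_eq_add_one_of_ne_zero hm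
    calc iterBeth χ m ^ #(LowerCoords S m) ≤ iterBeth χ m ^ iterBeth χ j :=
          power_le_power_left (iterBeth_ne_zero hχ m) (mk_lowerCoords_le hS hχ hχω hj)
      _ = iterBeth χ m := by rw [hj, iterBeth_succ_power_self hχ]

end Cardinality

end Sh883

open Sh883 in
/-- Let `χ` be an infinite cardinal with `χ^{ℵ₀} = χ`, for `ℓ ≤ k` let
`S_ℓ` be the set of ordinals below `ℶ_ℓ(χ)` (realized as `((iterBeth χ ℓ).ord).toType`),
and let `Λ` be the full set of tuples.  Given sets `B_ν` (`ν ∈ Λ_0 ∪ … ∪ Λ_k`) with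
`|B_ν| = ℶ_m(χ)` for `ν ∈ Λ_m`, there is a family `⟨h_{η̄} : η̄ ∈ Λ⟩`, where `h_{η̄}` is
a function on the restrictions of `η̄` with `h_{η̄}(η̄↾⟨m,n⟩) ∈ B_{η̄↾⟨m,n⟩}`, such that:
for every `h` with `h(ν) ∈ B_ν` for all `ν`, and all ordinals `α_ℓ < ℶ_ℓ(χ)`, there is
`η̄ ∈ Λ` with `h_{η̄} ⊆ h` and `η_ℓ(0) = α_ℓ` for every `ℓ ≤ k`. -/
theorem stmt12 (k : ℕ) (χ : Cardinal.{u}) (hχinf : ℵ₀ ≤ χ) (hχ : χ ^ ℵ₀ = χ)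
    (B : ResD k (fun l : Fin (k + 1) => ((iterBeth χ l.1).ord).ToType) → Type u)
    (hB : ∀ (m : Fin (k + 1))
        (ν : ResD k (fun l : Fin (k + 1) => ((iterBeth χ l.1).ord).ToType)),
        ν ∈ LambdaResAtD Set.univ m → #(B ν) = iterBeth χ m.1) :
    ∃ H : (η : (m : Fin (k + 1)) → ℕ → ((iterBeth χ m.1).ord).ToType) →
        (m : Fin (k + 1)) → (n : ℕ) → B (restrictAtD η m n),
      ∀ (h : (ν : ResD k (fun l : Fin (k + 1) => ((iterBeth χ l.1).ord).ToType)) → B ν)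
        (αs : Fin (k + 1) → Ordinal.{u})
        (hαs : ∀ l : Fin (k + 1), αs l < (iterBeth χ l.1).ord),
        ∃ η : (m : Fin (k + 1)) → ℕ → ((iterBeth χ m.1).ord).ToType,
          (∀ (m : Fin (k + 1)) (n : ℕ), h (restrictAtD η m n) = H η m n) ∧
          ∀ l : Fin (k + 1), η l 0 = Ordinal.ToType.mk ⟨αs l, hαs l⟩ := by
  let S l := ((iterBeth χ (l : Fin (k + 1))).ord).ToType
  have hS l : #(S l) = iterBeth χ l := by simp [S, Cardinal.mk_toType]
  have : ∀ l, Nonempty (S l) := fun l =>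
    Cardinal.mk_ne_zero_iff.mp (hS l ▸ iterBeth_ne_zero hχinf l)
  choose dec hdec using fun m => Function.exists_surjective_iff.mpr
    ⟨inferInstance, (Cardinal.le_def _ _).mp (mk_lowerCoords_arrow_le hS hχinf hχ m)⟩
  have hencode (ν : ResD k S) : ∃ enc : S ν.m → B ν, Function.Surjective enc :=
    let ⟨e⟩ := Cardinal.eq.mp ((hS ν.m).trans (hB ν.m ν (mem_lambdaResAtD_univ ν)).symm)
    ⟨e, e.surjective⟩
  choose enc henc using hencode
  obtain ⟨H, hH⟩ := exists_codedGuess_of_surjective hdec henc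
  exact ⟨H, fun h αs hαs => hH h fun l => Ordinal.ToType.mk ⟨αs l, hαs l⟩⟩
end

section
/- Let x = (S, Λ) be a combinatorial k*-parameter, let k ≤ k* be a natural number, let Λ' ⊆ Λ have cardinality at most ℵ_k, and for each η̄ ∈ Λ' let u_{η̄} ⊆ {0, …, k*} be a set with more than k elements. Then there exist an enumeration ⟨η̄^α : α < α*⟩ of Λ' without repetitions and, for each α < α*, an index ℓ_α ∈ u_{η̄^α} and a natural number n_α such that η̄^α↾⟨ℓ_α, n_α⟩ ∉ {η̄^β↾⟨ℓ_α, n_α⟩ : β < α}. -/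
open Cardinal

namespace Sh883

/-- A "restricted tuple": the result of replacing the `m`-th coordinate of a
`(k*+1)`-tuple of functions `ℕ → S` by a finite sequence (list) of elements of `S`,
keeping the other coordinates. -/
structure Res (k : ℕ) (S : Type u) where
  m : Fin (k + 1)
  seq : List S
  rest : (l : Fin (k + 1)) → l ≠ m → ℕ → S

/-- `η̄↾⟨m,n⟩` : replace the `m`-th coordinate of `η̄` by the finite sequence
`⟨η_m(0), …, η_m(n-1)⟩`. -/
def restrictAt {k : ℕ} {S : Type u} (η : Fin (k + 1) → ℕ → S) (m : Fin (k + 1)) (n : ℕ) :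
    Res k S :=
  ⟨m, List.ofFn fun i : Fin n => η m i, fun l _ => η l⟩

end Sh883

/-!
Induction on `k`. A countable family is enumerated by `ℕ`: every tuple then has finitely many
predecessors, and two distinct tuples have distinct restrictions `↾⟨ℓ, n⟩` for all large `n`,
whatever `ℓ` is.

For a family of size `ℵ_{k+1}`, list it in order type `ω_{k+1}` and put each tuple at the least
stage `o` such that each of its coordinates is the same coordinate of a tuple listed by `o`; every
stage then has at most `ℵ_k` tuples. A tuple of an earlier stage can agree with `η̄` off a
coordinate `ℓ` for at most one `ℓ`, since two such coordinates would assemble `η̄` from tuples of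
an earlier stage. Removing that coordinate from `u_η̄` leaves more than `k` choices, so the
induction hypothesis orders every stage, and the stages are concatenated in order.
-/

namespace Sh883

open Cardinal Filter Function

variable {kst : ℕ} {S : Type u} {ι : Type w}

theorem restrictAt_eq_restrictAt_iff {x y : Fin (kst + 1) → ℕ → S} {m : Fin (kst + 1)} {n : ℕ} :
    restrictAt x m n = restrictAt y m n ↔ (∀ i < n, x m i = y m i) ∧ ∀ l ≠ m, x l = y l := by
  simp only [restrictAt, Res.mk.injEq, heq_eq_eq, true_and, List.ofFn_inj, funext_iff,
    Fin.forall_iff]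

theorem eventually_restrictAt_ne {x y : Fin (kst + 1) → ℕ → S} (hxy : x ≠ y) (m : Fin (kst + 1)) :
    ∀ᶠ n in atTop, restrictAt x m n ≠ restrictAt y m n := by
  by_cases hm : x m = y m
  · obtain ⟨l, hl⟩ := Function.ne_iff.1 hxy
    have hlm : l ≠ m := by rintro rfl; exact hl hm
    exact Eventually.of_forall fun n h => hl ((restrictAt_eq_restrictAt_iff.1 h).2 l hlm)
  · obtain ⟨i, hi⟩ := Function.ne_iff.1 hm
    filter_upwards [eventually_gt_atTop i] with n hn h
    exact hi ((restrictAt_eq_restrictAt_iff.1 h).1 i hn)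

def IsSeparating (v : ι → Fin (kst + 1) → ℕ → S) (u : ι → Set (Fin (kst + 1)))
    (r : ι → ι → Prop) : Prop :=
  ∀ i, ∃ ℓ ∈ u i, ∃ n, ∀ j, r j i → restrictAt (v i) ℓ n ≠ restrictAt (v j) ℓ n

theorem exists_isSeparating_of_countable [Countable ι] {v : ι → Fin (kst + 1) → ℕ → S}
    (hv : Injective v) {u : ι → Set (Fin (kst + 1))} (hu : ∀ i, (u i).Nonempty) :
    ∃ r, IsWellOrder ι r ∧ IsSeparating v u r := by
  obtain ⟨f, hf⟩ := Countable.exists_injective_nat ι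
  refine ⟨(· < ·) on f, (RelEmbedding.preimage ⟨f, hf⟩ (· < ·)).isWellOrder, fun i => ?_⟩
  have hpred : {j | f j < f i}.Finite := (Set.finite_Iio (f i)).preimage hf.injOn
  obtain ⟨n, hn⟩ := ((eventually_all_finite hpred).2 fun j hj =>
    eventually_restrictAt_ne (hv.ne (ne_of_apply_ne f hj.ne')) (hu i).some).exists
  exact ⟨_, (hu i).some_mem, n, hn⟩

theorem exists_isWellOrder_lex_fibers {β : Type*} [LinearOrder β] [WellFoundedLT β] (f : ι → β)
    (r : ∀ b, {i // f i = b} → {i // f i = b} → Prop) [∀ b, IsWellOrder _ (r b)] :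
    ∃ R : ι → ι → Prop, IsWellOrder ι R ∧
      ∀ i j, R j i → f j < f i ∨ ∃ h : f j = f i, r (f i) ⟨j, h⟩ ⟨i, rfl⟩ := by
  let key : ι → β ×ₗ Ordinal.{w} := fun i => toLex (f i, Ordinal.typein (r (f i)) ⟨i, rfl⟩)
  have key_snd : ∀ j b (h : f j = b),
      Ordinal.typein (r (f j)) ⟨j, rfl⟩ = Ordinal.typein (r b) ⟨j, h⟩ := by
    rintro j _ rfl; rfl
  have hkey : Injective key := by
    intro i j hij
    obtain ⟨hf, ht⟩ := Prod.ext_iff.1 (toLex.injective hij)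
    rw [key_snd i (f j) hf] at ht
    exact congrArg Subtype.val (Ordinal.typein_injective _ ht)
  refine ⟨(· < ·) on key, (RelEmbedding.preimage ⟨key, hkey⟩ (· < ·)).isWellOrder, ?_⟩
  intro i j hji
  rcases Prod.Lex.toLex_lt_toLex.1 hji with hlt | ⟨hf, ht⟩
  · exact Or.inl hlt
  · rw [key_snd j (f i) hf] at ht
    exact Or.inr ⟨hf, (Ordinal.typein_lt_typein _).1 ht⟩

section Stages

variable (v : ι → Fin (kst + 1) → ℕ → S) (typ : ι → Ordinal.{w})

def coordHull (o : Ordinal.{w}) : Set (Fin (kst + 1) → ℕ → S) :=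
  {x | ∀ l, ∃ j, typ j ≤ o ∧ x l = v j l}

noncomputable def stage (i : ι) : Ordinal.{w} :=
  sInf {o | v i ∈ coordHull v typ o}

def badCoords (i : ι) : Set (Fin (kst + 1)) :=
  {ℓ | ∃ j, stage v typ j < stage v typ i ∧ ∀ l ≠ ℓ, v j l = v i l}

variable {v typ}

theorem coordHull_mono : Monotone (coordHull v typ) :=
  fun _ _ hab _ hx l => (hx l).imp fun _ hj => ⟨hj.1.trans hab, hj.2⟩

theorem mem_coordHull_of_agree {o : Ordinal.{w}} {x y z : Fin (kst + 1) → ℕ → S}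
    {ℓ₁ ℓ₂ : Fin (kst + 1)} (hx : x ∈ coordHull v typ o) (hy : y ∈ coordHull v typ o)
    (hℓ : ℓ₁ ≠ ℓ₂) (hzx : ∀ l ≠ ℓ₁, z l = x l) (hzy : ∀ l ≠ ℓ₂, z l = y l) :
    z ∈ coordHull v typ o := by
  intro l
  by_cases hl : l = ℓ₁
  · subst hl; rw [hzy l hℓ]; exact hy l
  · rw [hzx l hl]; exact hx l

theorem mem_coordHull_stage (i : ι) : v i ∈ coordHull v typ (stage v typ i) :=
  csInf_mem (s := {o | v i ∈ coordHull v typ o}) ⟨typ i, fun _ => ⟨i, le_rfl, rfl⟩⟩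

theorem stage_le (i : ι) : stage v typ i ≤ typ i :=
  csInf_le' fun _ => ⟨i, le_rfl, rfl⟩

theorem notMem_coordHull_of_lt_stage {i : ι} {o : Ordinal.{w}} (h : o < stage v typ i) :
    v i ∉ coordHull v typ o :=
  notMem_of_lt_csInf' (s := {o | v i ∈ coordHull v typ o}) h

theorem badCoords_subsingleton (i : ι) : (badCoords v typ i).Subsingleton := by
  rintro ℓ₁ ⟨j₁, hj₁, h₁⟩ ℓ₂ ⟨j₂, hj₂, h₂⟩
  by_contra hℓ
  have hsub : ∀ j, stage v typ j ≤ max (stage v typ j₁) (stage v typ j₂) →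
      v j ∈ coordHull v typ (max (stage v typ j₁) (stage v typ j₂)) :=
    fun j hj => coordHull_mono hj (mem_coordHull_stage j)
  exact notMem_coordHull_of_lt_stage (max_lt hj₁ hj₂) <|
    mem_coordHull_of_agree (hsub j₁ le_sup_left) (hsub j₂ le_sup_right) hℓ
      (fun l hl => (h₁ l hl).symm) (fun l hl => (h₂ l hl).symm)

theorem mk_stage_fiber_le (hv : Injective v) {c : Cardinal.{w}} (hc : ℵ₀ ≤ c)
    (hsmall : ∀ i, #{j | typ j ≤ typ i} ≤ c) (o : Ordinal.{w}) :
    #{i // stage v typ i = o} ≤ c := by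
  rcases isEmpty_or_nonempty {i // stage v typ i = o} with _ | ⟨i₀, rfl⟩
  · simp
  have hwit : ∀ i : {i // stage v typ i = stage v typ i₀}, ∀ l,
      ∃ j : {j | typ j ≤ typ i₀}, v i l = v j l := fun i l => by
    obtain ⟨j, hj, hvj⟩ := i.2 ▸ mem_coordHull_stage (typ := typ) i l
    exact ⟨⟨j, hj.trans (stage_le i₀)⟩, hvj⟩
  choose g hg using hwit
  have hg_inj : Injective g := fun i i' h => Subtype.ext <| hv <| funext fun l => by
    rw [hg i l, hg i' l, h]
  calc #{i // stage v typ i = stage v typ i₀}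
      ≤ #(Fin (kst + 1) → {j | typ j ≤ typ i₀}) := mk_le_of_injective hg_inj
    _ = #{j | typ j ≤ typ i₀} ^ (kst + 1) := by simp; norm_cast
    _ ≤ c ^ (kst + 1) := power_le_power_right (hsmall i₀)
    _ ≤ c := power_nat_le hc

end Stages

theorem exists_ordinal_ranking_of_mk_le_succ {c : Cardinal.{w}} (hc : ℵ₀ ≤ c)
    (hι : #ι ≤ Order.succ c) : ∃ typ : ι → Ordinal.{w}, ∀ i, #{j | typ j ≤ typ i} ≤ c := by
  obtain ⟨g⟩ : Nonempty (ι ↪ Set.Iio (Order.succ c).ord) := by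
    rw [← lift_mk_le', Cardinal.mk_Iio_ordinal, card_ord, Cardinal.lift_lift]
    exact lift_le.2 hι
  refine ⟨fun i => g i, fun i => ?_⟩
  have hlt : (g i : Ordinal) + 1 < (Order.succ c).ord := by
    rw [← Order.succ_eq_add_one]
    exact (isSuccLimit_ord (hc.trans (Order.le_succ c))).succ_lt (g i).2
  have hinj : Injective fun j : {j | (g j : Ordinal) ≤ g i} =>
      (⟨g j, Set.mem_Iio.2 (Order.lt_add_one_iff.2 j.2)⟩ : Set.Iio ((g i : Ordinal) + 1)) :=
    fun j j' h => Subtype.ext <| g.injective <| Subtype.ext <| by simpa using h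
  have := lift_mk_le_lift_mk_of_injective hinj
  rw [Cardinal.mk_Iio_ordinal, Cardinal.lift_lift, Cardinal.lift_le] at this
  exact this.trans (Order.lt_succ_iff.1 (lt_ord.1 hlt))

theorem lt_ncard_sdiff_badCoords {v : ι → Fin (kst + 1) → ℕ → S} {typ : ι → Ordinal.{w}} {k : ℕ}
    {u : ι → Set (Fin (kst + 1))} (hu : ∀ i, k + 1 < (u i).ncard) (i : ι) :
    k < (u i \ badCoords v typ i).ncard :=
  calc k < (u i).ncard - (badCoords v typ i).ncard := by
        have := Set.ncard_le_one_iff_subsingleton.2 (badCoords_subsingleton (v := v) (typ := typ) i)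
        specialize hu i
        omega
    _ ≤ (u i \ badCoords v typ i).ncard := Set.le_ncard_sdiff _ _

theorem exists_isSeparating_of_mk_le_succ {c : Cardinal.{w}} (hc : ℵ₀ ≤ c) {k : ℕ}
    (ih : ∀ (ι : Type w) (v : ι → Fin (kst + 1) → ℕ → S), Injective v → #ι ≤ c →
      ∀ u : ι → Set (Fin (kst + 1)), (∀ i, k < (u i).ncard) →
        ∃ r, IsWellOrder ι r ∧ IsSeparating v u r)
    {v : ι → Fin (kst + 1) → ℕ → S} (hv : Injective v) (hι : #ι ≤ Order.succ c)
    {u : ι → Set (Fin (kst + 1))} (hu : ∀ i, k + 1 < (u i).ncard) :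
    ∃ r, IsWellOrder ι r ∧ IsSeparating v u r := by
  obtain ⟨typ, hsmall⟩ := exists_ordinal_ranking_of_mk_le_succ hc hι
  have hfiber : ∀ o, ∃ r, IsWellOrder _ r ∧ IsSeparating (fun i : {i // stage v typ i = o} => v i)
      (fun i => u i \ badCoords v typ i) r := fun o =>
    ih _ _ (hv.comp Subtype.val_injective) (mk_stage_fiber_le hv hc hsmall o) _
      fun i => lt_ncard_sdiff_badCoords hu i
  choose r hr hsep using hfiber
  obtain ⟨R, hR, hRlex⟩ := exists_isWellOrder_lex_fibers (stage v typ) r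
  refine ⟨R, hR, fun i => ?_⟩
  obtain ⟨ℓ, ⟨hℓu, hℓbad⟩, n, hn⟩ := hsep (stage v typ i) ⟨i, rfl⟩
  refine ⟨ℓ, hℓu, n, fun j hji => ?_⟩
  rcases hRlex i j hji with hlt | ⟨heq, hjr⟩
  · intro h
    exact hℓbad ⟨j, hlt, fun l hl => ((restrictAt_eq_restrictAt_iff.1 h).2 l hl).symm⟩
  · exact hn ⟨j, heq⟩ hjr

theorem exists_isSeparating (k : ℕ) {v : ι → Fin (kst + 1) → ℕ → S}
    (hv : Injective v) (hι : #ι ≤ ℵ_ k) {u : ι → Set (Fin (kst + 1))}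
    (hu : ∀ i, k < (u i).ncard) : ∃ r, IsWellOrder ι r ∧ IsSeparating v u r := by
  induction k generalizing ι with
  | zero =>
    have : Countable ι := mk_le_aleph0_iff.1 (by simpa using hι)
    exact exists_isSeparating_of_countable hv fun i => Set.nonempty_of_ncard_ne_zero (hu i).ne'
  | succ k ih =>
    refine exists_isSeparating_of_mk_le_succ (aleph0_le_aleph k)
      (fun _ _ hv' hι' _ hu' => ih hv' hι' hu') hv ?_ hu
    rw [succ_aleph]
    simpa using hι

end Sh883

open Sh883 in
theorem stmt16_general {kst : ℕ} {S : Type u} (k : ℕ) (Λ' : Set (Fin (kst + 1) → ℕ → S))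
    (hcard : #Λ' ≤ Cardinal.aleph k)
    (u : (Fin (kst + 1) → ℕ → S) → Set (Fin (kst + 1)))
    (hu : ∀ η ∈ Λ', k < (u η).ncard) :
    ∃ (o : Ordinal.{u}) (e : Set.Iio o → (Fin (kst + 1) → ℕ → S))
      (L : Set.Iio o → Fin (kst + 1)) (N : Set.Iio o → ℕ),
      Function.Injective e ∧ Set.range e = Λ' ∧
      (∀ α : Set.Iio o, L α ∈ u (e α)) ∧
      ∀ α β : Set.Iio o, (β : Ordinal) < (α : Ordinal) →
        restrictAt (e α) (L α) (N α) ≠ restrictAt (e β) (L α) (N α) := by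
  obtain ⟨r, hr, hsep⟩ := exists_isSeparating k Subtype.val_injective hcard
    (u := fun η : Λ' => u η) fun η => hu η η.2
  choose L hL N hN using hsep
  refine ⟨Ordinal.type r, fun α => Ordinal.enum r α, fun α => L (Ordinal.enum r α),
    fun α => N (Ordinal.enum r α), Subtype.val_injective.comp (Ordinal.enum r).injective, ?_,
    fun α => hL _, fun α β hβα => hN _ _ ((Ordinal.enum r).map_rel_iff.2 hβα)⟩
  exact ((Ordinal.enum r).surjective.range_comp Subtype.val).trans Subtype.range_coe

open Sh883 in
/-- Let `(S, Λ)` be a combinatorial `k*`-parameter, `k ≤ k*`, let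
`Λ' ⊆ Λ` have cardinality at most `ℵ_k`, and for each `η̄ ∈ Λ'` let `u_{η̄} ⊆ {0,…,k*}`
have more than `k` elements.  Then there are an enumeration `⟨η̄^α : α < α*⟩` of `Λ'`
without repetitions and, for each `α`, an index `ℓ_α ∈ u_{η̄^α}` and `n_α ∈ ℕ` with
`η̄^α↾⟨ℓ_α,n_α⟩ ∉ {η̄^β↾⟨ℓ_α,n_α⟩ : β < α}`. -/
theorem stmt16 {kst : ℕ} {S : Type u} (Λ : Set (Fin (kst + 1) → ℕ → S))
    (k : ℕ) (hk : k ≤ kst)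
    (Λ' : Set (Fin (kst + 1) → ℕ → S)) (hsub : Λ' ⊆ Λ)
    (hcard : #Λ' ≤ Cardinal.aleph k)
    (u : (Fin (kst + 1) → ℕ → S) → Set (Fin (kst + 1)))
    (hu : ∀ η ∈ Λ', k < (u η).ncard) :
    ∃ (o : Ordinal.{u}) (e : Set.Iio o → (Fin (kst + 1) → ℕ → S))
      (L : Set.Iio o → Fin (kst + 1)) (N : Set.Iio o → ℕ),
      Function.Injective e ∧ Set.range e = Λ' ∧
      (∀ α : Set.Iio o, L α ∈ u (e α)) ∧
      ∀ α β : Set.Iio o, (β : Ordinal) < (α : Ordinal) →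
        restrictAt (e α) (L α) (N α) ≠ restrictAt (e β) (L α) (N α) :=
  stmt16_general k Λ' hcard u hu
end
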